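/- For real symmetric positive definite n×n matrices A, B, the set {U ∈ ℝ^{n×n} : [[B,Uᵀ],[U,I]] ⪰ 0} contains an element of the form U = W where W ∈ O(n) scaled appropriately attains Tr(√A·U) = Tr(√(√A B √A)); moreover for all feasible U, Tr(√A·U) ≤ Tr(√(√A B √A)). -/

import Mathlib

/-!
With `S = √A` and `C = √(S B S)`, feasibility of `U` is the Schur-complement condition
`Uᵀ U ≤ B`, so `M = U S` satisfies `Mᵀ M ≤ C²`. For such `M`, summing the traces of the
positive semidefinite matrices `(C² - Mᵀ M) C⁻¹` and `(M - C)ᵀ (M - C) C⁻¹` gives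
`0 ≤ 2 Tr C - 2 Tr M`, i.e. `Tr (S U) ≤ Tr C`. The bound is attained at `U = C S⁻¹`, for which
`Uᵀ U = S⁻¹ C² S⁻¹ = B`.
-/

open Matrix BigOperators

open Classical in
noncomputable def msqrt {n : ℕ} (M : Matrix (Fin n) (Fin n) ℝ) : Matrix (Fin n) (Fin n) ℝ :=
  if h : M.PosSemidef then
    h.1.eigenvectorUnitary.1 * diagonal (Real.sqrt ∘ h.1.eigenvalues) *
      (star h.1.eigenvectorUnitary : Matrix (Fin n) (Fin n) ℝ)
  else 0

noncomputable def fnorm {n : ℕ} (A : Matrix (Fin n) (Fin n) ℝ) : ℝ :=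
  Real.sqrt (∑ i, ∑ j, (A i j) ^ 2)

open scoped MatrixOrder

namespace Matrix

variable {m n : Type*} [Fintype m] [Fintype n] [DecidableEq n]

theorem PosSemidef.trace_mul_nonneg {X P : Matrix n n ℝ} (hX : X.PosSemidef)
    (hP : P.PosSemidef) : 0 ≤ (X * P).trace := by
  obtain ⟨R, rfl⟩ := CStarAlgebra.nonneg_iff_eq_star_mul_self.mp hP.nonneg
  rw [← Matrix.mul_assoc, trace_mul_cycle]
  exact (hX.mul_mul_conjTranspose_same R).trace_nonneg

theorem posSemidef_fromBlocks_one_iff {B : Matrix m m ℝ} {U : Matrix n m ℝ} :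
    (fromBlocks B Uᵀ U 1).PosSemidef ↔ (B - Uᵀ * U).PosSemidef := by
  let : Invertible (1 : Matrix n n ℝ) := invertibleOne
  have := PosDef.fromBlocks₂₂ B Uᵀ (PosDef.one (n := n) (R := ℝ))
  rwa [conjTranspose_eq_transpose_of_trivial, transpose_transpose, inv_one,
    Matrix.mul_one] at this

theorem trace_le_trace_of_posSemidef_mul_self_sub {M C : Matrix n n ℝ} (hC : C.PosDef)
    (h : (C * C - Mᵀ * M).PosSemidef) : M.trace ≤ C.trace := by
  have hCt : Cᵀ = C := hC.1
  have hCu : IsUnit C.det := (isUnit_iff_isUnit_det C).mp hC.isUnit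
  have hCinv := hC.inv.posSemidef
  have h₁ := h.trace_mul_nonneg hCinv
  have h₂ := (posSemidef_conjTranspose_mul_self (M - C)).trace_mul_nonneg hCinv
  rw [conjTranspose_eq_transpose_of_trivial, transpose_sub, hCt] at h₂
  have hcyc : (C * M * C⁻¹).trace = M.trace := by
    rw [trace_mul_cycle, nonsing_inv_mul _ hCu, Matrix.one_mul]
  simp only [Matrix.sub_mul, Matrix.mul_sub, trace_sub,
    mul_nonsing_inv_cancel_right _ _ hCu, hcyc, trace_transpose] at h₁ h₂
  linarith

end Matrix

theorem msqrt_eq_cfcSqrt {n : ℕ} {M : Matrix (Fin n) (Fin n) ℝ} (h : M.PosSemidef) :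
    msqrt M = CFC.sqrt M := by
  rw [msqrt, dif_pos h, CFC.sqrt_eq_real_sqrt M h.nonneg, cfcₙ_eq_cfc, h.1.cfc_eq]
  simp [IsHermitian.cfc, RCLike.ofReal_real_eq_id, Matrix.mul_assoc]

theorem msqrt_mul_self {n : ℕ} {M : Matrix (Fin n) (Fin n) ℝ} (h : M.PosSemidef) :
    msqrt M * msqrt M = M := by
  rw [msqrt_eq_cfcSqrt h]
  exact CFC.sqrt_mul_sqrt_self M h.nonneg

theorem Matrix.PosDef.msqrt {n : ℕ} {M : Matrix (Fin n) (Fin n) ℝ} (h : M.PosDef) :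
    (msqrt M).PosDef := by
  rw [msqrt_eq_cfcSqrt h.posSemidef]
  exact (IsStrictlyPositive.sqrt M h.isStrictlyPositive).posDef

theorem stmt_11 {n : ℕ} (A B : Matrix (Fin n) (Fin n) ℝ)
    (hA : A.PosDef) (hB : B.PosDef) :
    (∃ U : Matrix (Fin n) (Fin n) ℝ, (Matrix.fromBlocks B Uᵀ U 1).PosSemidef ∧
        (msqrt A * U).trace = (msqrt (msqrt A * B * msqrt A)).trace) ∧
    ∀ U : Matrix (Fin n) (Fin n) ℝ, (Matrix.fromBlocks B Uᵀ U 1).PosSemidef →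
      (msqrt A * U).trace ≤ (msqrt (msqrt A * B * msqrt A)).trace := by
  set S := msqrt A
  have hS : S.PosDef := hA.msqrt
  have hSt : Sᵀ = S := hS.1
  have hSu : IsUnit S.det := (isUnit_iff_isUnit_det S).mp hS.isUnit
  have hSBS : (S * B * S).PosDef := by
    simpa only [conjTranspose_eq_transpose_of_trivial, hSt] using
      hB.mul_mul_conjTranspose_same (vecMul_injective_iff_isUnit.mpr hS.isUnit)
  set C := msqrt (S * B * S)
  have hC : C.PosDef := hSBS.msqrt
  have hCt : Cᵀ = C := hC.1
  have hCC : C * C = S * B * S := msqrt_mul_self hSBS.posSemidef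
  refine ⟨⟨C * S⁻¹, ?_, ?_⟩, fun U hU => ?_⟩
  · have hU₀ : (C * S⁻¹)ᵀ * (C * S⁻¹) = B := calc
        (C * S⁻¹)ᵀ * (C * S⁻¹) = S⁻¹ * (C * C) * S⁻¹ := by
          rw [transpose_mul, transpose_nonsing_inv, hSt, hCt]
          simp only [Matrix.mul_assoc]
        _ = B := by
          rw [hCC, ← Matrix.mul_assoc, ← Matrix.mul_assoc, nonsing_inv_mul _ hSu,
            Matrix.one_mul, mul_nonsing_inv_cancel_right _ _ hSu]
    rw [posSemidef_fromBlocks_one_iff, hU₀, sub_self]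
    exact .zero
  · rw [trace_mul_comm, nonsing_inv_mul_cancel_right _ _ hSu]
  · have hMM : C * C - (U * S)ᵀ * (U * S) = S * (B - Uᵀ * U) * Sᴴ := by
      rw [hCC, conjTranspose_eq_transpose_of_trivial, hSt, transpose_mul, hSt]
      simp only [Matrix.mul_sub, Matrix.sub_mul, Matrix.mul_assoc]
    rw [trace_mul_comm]
    exact trace_le_trace_of_posSemidef_mul_self_sub hC
      (hMM ▸ (posSemidef_fromBlocks_one_iff.mp hU).mul_mul_conjTranspose_same S)
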